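/- Let x ∈ [0,1]^n with coordinate mean x̄ = (1/n)Σᵢ xᵢ, and let m ∈ [0,1]. If the optimal solution y* to min_{y ∈ [0,1]^n} ‖x - y‖₂² subject to (1/n)Σᵢ yᵢ = m satisfies x̄ < m, then y*ᵢ ≥ xᵢ for every coordinate i. -/

import Mathlib

/-!
If `y j < x j` for some `j`, then, since `∑ x < ∑ y`, some `k` has `x k < y k`. Moving the mass
`ε = min (x j - y j) (y k - x k)` from coordinate `k` to coordinate `j` keeps `y` in the box and
on the hyperplane, and changes `‖x - y‖²` by `-2ε (x j - y j + y k - x k) + 2ε² < 0`,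
contradicting optimality.
-/

open Finset

namespace EuclideanSpace

variable {ι : Type*} [Fintype ι] [DecidableEq ι]

theorem sum_add_smul_single_sub_single (y : EuclideanSpace ℝ ι) (j k : ι) (ε : ℝ) :
    ∑ i, (y + ε • (single j 1 - single k 1) : EuclideanSpace ℝ ι) i = ∑ i, y i := by
  simp [sum_add_distrib, mul_sub, sum_sub_distrib]

theorem norm_sub_smul_single_sub_single_sq (v : EuclideanSpace ℝ ι) {j k : ι} (hjk : j ≠ k)
    (ε : ℝ) :
    ‖v - ε • (single j 1 - single k 1)‖ ^ 2 = ‖v‖ ^ 2 - 2 * ε * (v j - v k) + 2 * ε ^ 2 := by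
  have hd : ‖(single j 1 - single k 1 : EuclideanSpace ℝ ι)‖ ^ 2 = 2 := by
    rw [norm_sub_sq_real, inner_single_left, PiLp.single_apply, if_neg hjk]
    norm_num
  rw [norm_sub_sq_real, inner_smul_right, inner_sub_right, inner_single_right,
    inner_single_right, norm_smul, mul_pow, hd, Real.norm_eq_abs, sq_abs]
  simp only [RCLike.conj_to_real]
  ring

end EuclideanSpace

section

open EuclideanSpace

variable {ι : Type*} [Fintype ι] [DecidableEq ι] {l u : ℝ} {x y : EuclideanSpace ℝ ι}

theorem exists_closer_of_lt_of_lt (hx : ∀ i, x i ∈ Set.Icc l u) (hy : ∀ i, y i ∈ Set.Icc l u)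
    {j k : ι} (hj : y j < x j) (hk : x k < y k) :
    ∃ z : EuclideanSpace ℝ ι, (∀ i, z i ∈ Set.Icc l u) ∧ ∑ i, z i = ∑ i, y i ∧
      ‖x - z‖ < ‖x - y‖ := by
  have hjk : j ≠ k := by rintro rfl; linarith
  set ε := min (x j - y j) (y k - x k)
  have hε : 0 < ε := lt_min (by linarith) (by linarith)
  have hεj : ε ≤ x j - y j := min_le_left _ _
  have hεk : ε ≤ y k - x k := min_le_right _ _
  refine ⟨y + ε • (single j 1 - single k 1), fun i => ?_,
    sum_add_smul_single_sub_single y j k ε, ?_⟩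
  · obtain ⟨hyl, hyu⟩ := hy i
    obtain ⟨hxjl, hxju⟩ := hx j
    obtain ⟨hxkl, hxku⟩ := hx k
    simp only [PiLp.add_apply, PiLp.smul_apply, PiLp.sub_apply, PiLp.single_apply, smul_eq_mul]
    split_ifs with hij hik hik
    · exact absurd (hij.symm.trans hik) hjk
    all_goals subst_vars; constructor <;> linarith
  · rw [← sub_sub, ← sq_lt_sq₀ (norm_nonneg _) (norm_nonneg _),
      norm_sub_smul_single_sub_single_sq _ hjk]
    simp only [PiLp.sub_apply]
    nlinarith

theorem le_of_isMinOn_norm_sub_of_sum_lt (hx : ∀ i, x i ∈ Set.Icc l u)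
    (hy : ∀ i, y i ∈ Set.Icc l u)
    (hmin : IsMinOn (fun z => ‖x - z‖)
      {z | (∀ i, z i ∈ Set.Icc l u) ∧ ∑ i, z i = ∑ i, y i} y)
    (hsum : ∑ i, x i < ∑ i, y i) (j : ι) : x j ≤ y j := by
  by_contra! hj
  obtain ⟨k, -, hk⟩ := exists_lt_of_sum_lt hsum
  obtain ⟨z, hz, hzsum, hzx⟩ := exists_closer_of_lt_of_lt hx hy hj hk
  exact (isMinOn_iff.mp hmin z ⟨hz, hzsum⟩).not_gt hzx

end

theorem mean_shift_monotone_general (n : ℕ)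
    (x : EuclideanSpace ℝ (Fin n)) (hx : ∀ i, x i ∈ Set.Icc (0:ℝ) 1)
    (m : ℝ)
    (hmean : (∑ i, x i) / n < m)
    (y : EuclideanSpace ℝ (Fin n))
    (hyfeas : (∀ i, y i ∈ Set.Icc (0:ℝ) 1) ∧ (∑ i, y i) / n = m)
    (hyopt : ∀ z : EuclideanSpace ℝ (Fin n),
      (∀ i, z i ∈ Set.Icc (0:ℝ) 1) → (∑ i, z i) / n = m →
        ‖x - y‖^2 ≤ ‖x - z‖^2) :
    ∀ i, x i ≤ y i := by
  obtain ⟨hy, rfl⟩ := hyfeas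
  have hsum : ∑ i, x i < ∑ i, y i :=
    lt_of_not_ge fun h => hmean.not_ge (div_le_div_of_nonneg_right h n.cast_nonneg)
  refine le_of_isMinOn_norm_sub_of_sum_lt hx hy (isMinOn_iff.mpr fun z ⟨hz, hzsum⟩ => ?_) hsum
  exact (sq_le_sq₀ (norm_nonneg _) (norm_nonneg _)).mp (hyopt z hz (by rw [hzsum]))

/-- If the target mean `m` exceeds the coordinate mean of `x`, then the least-squares
optimal mean-shifted point `y*` weakly increases every coordinate of `x`. -/
theorem mean_shift_monotone (n : ℕ) (hn : 0 < n)
    (x : EuclideanSpace ℝ (Fin n)) (hx : ∀ i, x i ∈ Set.Icc (0:ℝ) 1)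
    (m : ℝ) (hm : m ∈ Set.Icc (0:ℝ) 1)
    (hmean : (∑ i, x i) / n < m)
    (y : EuclideanSpace ℝ (Fin n))
    (hyfeas : (∀ i, y i ∈ Set.Icc (0:ℝ) 1) ∧ (∑ i, y i) / n = m)
    (hyopt : ∀ z : EuclideanSpace ℝ (Fin n),
      (∀ i, z i ∈ Set.Icc (0:ℝ) 1) → (∑ i, z i) / n = m →
        ‖x - y‖^2 ≤ ‖x - z‖^2) :
    ∀ i, x i ≤ y i :=
  mean_shift_monotone_general n x hx m hmean y hyfeas hyopt
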